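/- arXiv:2201.04041 — 6 statements merged into one kernel-verified Lean document; each statement's English description precedes it below -/
import Mathlib

section
/- Let V be a finite-dimensional complex vector space, let A be a linear endomorphism of V, and let T be a bijective linear endomorphism of V. Then T belongs to Col(A) if and only if for every vector x ∈ V the image T((A)_x) of the cyclic subspace (A)_x under T is an A-invariant subspace of V. -/
open Submodule

/-- A subspace `M` is invariant under the endomorphism `A`. -/
def InvSub {V : Type*} [AddCommGroup V] [Module ℂ V] (A : V →ₗ[ℂ] V)
    (M : Submodule ℂ V) : Prop :=
  M.map A ≤ M

/-- `T ∈ Col(A)`: `T` is bijective and a subspace is `A`-invariant iff its image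
under `T` is `A`-invariant. -/
def Col {V : Type*} [AddCommGroup V] [Module ℂ V] (A T : V →ₗ[ℂ] V) : Prop :=
  Function.Bijective T ∧ ∀ M : Submodule ℂ V, InvSub A M ↔ InvSub A (M.map T)

/-- The cyclic subspace `(A)_x`, i.e. the span of `{A^n x : n ≥ 0}`. -/
def cyc {V : Type*} [AddCommGroup V] [Module ℂ V] (A : V →ₗ[ℂ] V) (x : V) :
    Submodule ℂ V :=
  Submodule.span ℂ (Set.range fun n : ℕ => (A ^ n) x)

/-!
Cyclic subspaces are invariant, which gives the forward direction. Conversely, invariance of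
`T (A)_x` gives `(A)_{Tx} ≤ T (A)_x`, so `dim (A)_{Tx} ≤ dim (A)_x`. The set of `y` with
`dim (A)_y < k` is Zariski closed, being cut out by the determinants that detect linear dependence
of `A^{s_1} y, …, A^{s_k} y`, and `T` maps it into itself. Since the ring of polynomial functions
on `V` is Noetherian, an invertible linear map sending a Zariski closed set into itself maps it
onto itself; hence the dimension never drops, `T (A)_x = (A)_{Tx}` for every `x`, and `T` preserves
invariance in both directions because a subspace is invariant iff it contains the cyclic subspace
of each of its vectors.
-/

theorem StrictMono.apply_eq_of_le_apply {α : Type*} [PartialOrder α] [WellFoundedGT α]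
    {f : α → α} (hf : StrictMono f) {x : α} (hx : x ≤ f x) : f x = x := by
  by_contra hne
  have hchain : StrictMono fun n => f^[n] x := strictMono_nat_of_lt_succ fun n => by
    rw [Function.iterate_succ_apply]
    exact hf.iterate n (lt_of_le_of_ne hx (Ne.symm hne))
  obtain ⟨n, hn⟩ := WellFoundedGT.monotone_chain_condition ⟨_, hchain.monotone⟩
  exact (hchain n.lt_succ_self).ne (hn _ n.le_succ)

section

variable {K V W : Type*} [Field K] [AddCommGroup V] [Module K V] [AddCommGroup W]
  [Module K W]

theorem not_linearIndependent_iff_forall_det_eq_zero {ι : Type*} [Fintype ι] [DecidableEq ι]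
    {u : ι → V} : ¬LinearIndependent K u ↔
      ∀ φ : ι → Module.Dual K V, (Matrix.of fun i j => φ i (u j)).det = 0 := by
  constructor
  · intro hu φ
    obtain ⟨g, hg, i, hi⟩ := Fintype.not_linearIndependent_iff.1 hu
    refine Matrix.exists_mulVec_eq_zero_iff.1
      ⟨g, fun h => hi (congrFun h i), funext fun i => ?_⟩
    simpa [Matrix.mulVec, dotProduct, mul_comm] using congrArg (φ i) hg
  · intro hdet hu
    obtain ⟨Φ, hΦ⟩ := (Fintype.linearCombination K u).exists_leftInverse_of_injective
      (LinearMap.ker_eq_bot.2 hu.fintypeLinearCombination_injective)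
    have hone : (Matrix.of fun i j => Φ (u j) i) = 1 := by
      ext i j
      have := LinearMap.congr_fun hΦ (Pi.single j 1)
      simp only [LinearMap.comp_apply, Fintype.linearCombination_apply_single, one_smul,
        LinearMap.id_apply] at this
      simp [this, Matrix.one_apply, Pi.single_apply]
    simpa [hone] using hdet fun i => LinearMap.proj i ∘ₗ Φ

theorem le_finrank_span_range_iff_exists_linearIndependent [FiniteDimensional K V] {ι : Type*}
    {v : ι → V} {k : ℕ} :
    k ≤ Module.finrank K (Submodule.span K (Set.range v)) ↔
      ∃ s : Fin k → ι, LinearIndependent K (v ∘ s) := by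
  constructor
  · intro hk
    obtain ⟨κ, a, -, hspan, hli⟩ := exists_linearIndependent' K v
    have := hli.finite
    have := Fintype.ofFinite κ
    rw [← hspan, finrank_span_eq_card hli] at hk
    obtain ⟨e⟩ := Function.Embedding.nonempty_of_card_le (α := Fin k) (β := κ)
      (by simpa using hk)
    exact ⟨a ∘ e, hli.comp e e.injective⟩
  · rintro ⟨s, hs⟩
    calc k = Module.finrank K (Submodule.span K (Set.range (v ∘ s))) := by
          simp [finrank_span_eq_card hs]
      _ ≤ _ := Submodule.finrank_mono (Submodule.span_mono (Set.range_comp_subset_range s v))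

variable (K V) in
def polynomialMaps : Subalgebra K (V → K) :=
  Algebra.adjoin K (Set.range fun φ : Module.Dual K V => ⇑φ)

namespace polynomialMaps

lemma dual_mem (φ : Module.Dual K V) : ⇑φ ∈ polynomialMaps K V :=
  Algebra.subset_adjoin ⟨φ, rfl⟩

lemma comp_mem (S : V →ₗ[K] W) {f : W → K} (hf : f ∈ polynomialMaps K W) :
    f ∘ S ∈ polynomialMaps K V := by
  let Φ : (W → K) →ₐ[K] (V → K) :=
    AlgHom.pi fun v => Pi.evalAlgHom K (fun _ : W => K) (S v)
  have : polynomialMaps K W ≤ (polynomialMaps K V).comap Φ :=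
    Algebra.adjoin_le (by rintro _ ⟨φ, rfl⟩; exact dual_mem (φ ∘ₗ S))
  exact this hf

def comp (S : V →ₗ[K] W) : polynomialMaps K W →+* polynomialMaps K V where
  toFun f := ⟨f ∘ S, comp_mem S f.2⟩
  map_one' := rfl
  map_mul' _ _ := rfl
  map_zero' := rfl
  map_add' _ _ := rfl

@[simp] lemma comp_apply (S : V →ₗ[K] W) (f : polynomialMaps K W) (v : V) :
    (comp S f : V → K) v = (f : W → K) (S v) := rfl

lemma comp_surjective (S : V ≃ₗ[K] W) : Function.Surjective (comp (S : V →ₗ[K] W)) :=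
  fun f => ⟨comp (S.symm : W →ₗ[K] V) f, by ext v; simp⟩

instance [FiniteDimensional K V] : IsNoetherianRing (polynomialMaps K V) := by
  let b := Module.finBasis K V
  refine isNoetherianRing_of_fg (Subalgebra.fg_def.2 ⟨Set.range fun i => ⇑(b.coord i),
    Set.finite_range _, le_antisymm (Algebra.adjoin_le ?_) (Algebra.adjoin_le ?_)⟩)
  · rintro _ ⟨i, rfl⟩
    exact dual_mem _
  · rintro _ ⟨φ, rfl⟩
    rw [← b.sum_dual_apply_smul_coord φ]
    simp only [LinearMap.coe_sum, LinearMap.coe_smul]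
    exact Subalgebra.sum_mem _ fun i _ =>
      Subalgebra.smul_mem _ (Algebra.subset_adjoin (Set.mem_range_self i)) _

def zeroLocus (F : Set (polynomialMaps K V)) : Set V :=
  {v | ∀ f ∈ F, (f : V → K) v = 0}

def vanishingIdeal (Z : Set V) : Ideal (polynomialMaps K V) where
  carrier := {f | ∀ v ∈ Z, (f : V → K) v = 0}
  add_mem' hf hg v hv := by simp [hf v hv, hg v hv]
  zero_mem' _ _ := rfl
  smul_mem' c f hf v hv := by simp [hf v hv]

end polynomialMaps

open polynomialMaps

variable (K) in
def IsZariskiClosed (Z : Set V) : Prop :=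
  ∃ F : Set (polynomialMaps K V), zeroLocus F = Z

namespace IsZariskiClosed

variable {Z : Set V}

lemma zeroLocus_vanishingIdeal (hZ : IsZariskiClosed K Z) :
    zeroLocus (vanishingIdeal (K := K) Z : Set (polynomialMaps K V)) = Z := by
  obtain ⟨F, rfl⟩ := hZ
  exact le_antisymm (fun v hv f hf => hv f fun w hw => hw f hf) fun v hv f hf => hf v hv

lemma iInter {ι : Sort*} {Z : ι → Set V} (h : ∀ i, IsZariskiClosed K (Z i)) :
    IsZariskiClosed K (⋂ i, Z i) := by
  choose F hF using h
  refine ⟨⋃ i, F i, ?_⟩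
  ext v
  simp only [zeroLocus, ← hF, Set.mem_iUnion, Set.mem_iInter, Set.mem_ofPred_eq]
  exact ⟨fun h i f hf => h f ⟨i, hf⟩, fun h f ⟨i, hf⟩ => h i f hf⟩

theorem image_eq_of_image_subset [FiniteDimensional K V] (hZ : IsZariskiClosed K Z)
    (S : V ≃ₗ[K] V) (h : S '' Z ⊆ Z) : S '' Z = Z := by
  set J := vanishingIdeal (K := K) Z
  have hle : J ≤ J.comap (comp (S : V →ₗ[K] V)) :=
    fun f hf v hv => hf (S v) (h ⟨v, hv, rfl⟩)
  have hJ : J.comap (comp (S : V →ₗ[K] V)) = J :=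
    (Monotone.strictMono_of_injective (fun _ _ => Ideal.comap_mono)
      (Ideal.comap_injective_of_surjective _ (comp_surjective S))).apply_eq_of_le_apply hle
  refine h.antisymm fun v hv => ⟨S.symm v, ?_, S.apply_symm_apply v⟩
  rw [← hZ.zeroLocus_vanishingIdeal] at hv ⊢
  intro f hf
  have hcomp : comp (S : V →ₗ[K] V) (comp (S.symm : V →ₗ[K] V) f) = f := by
    ext w
    simp
  have : comp (S.symm : V →ₗ[K] V) f ∈ J := by
    rwa [← hJ, Ideal.mem_comap, hcomp]
  simpa using hv _ this

end IsZariskiClosed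

theorem isZariskiClosed_setOf_not_linearIndependent {ι : Type*} [Fintype ι]
    (L : ι → V →ₗ[K] W) : IsZariskiClosed K {v | ¬LinearIndependent K fun i => L i v} := by
  classical
  refine ⟨Set.range fun φ : ι → Module.Dual K W =>
    (Matrix.of fun i j => (⟨_, dual_mem (φ i ∘ₗ L j)⟩ : polynomialMaps K V)).det, ?_⟩
  ext v
  have hdet (M : Matrix ι ι (polynomialMaps K V)) :
      ((M.det : polynomialMaps K V) : V → K) v = (M.map fun f => (f : V → K) v).det :=
    RingHom.map_det ((Pi.evalRingHom _ v).comp (polynomialMaps K V).val.toRingHom) M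
  simp only [zeroLocus, Set.mem_range, forall_exists_index, forall_apply_eq_imp_iff,
    Set.mem_ofPred_eq, not_linearIndependent_iff_forall_det_eq_zero, hdet]
  rfl

end

section Cyclic

variable {V : Type*} [AddCommGroup V] [Module ℂ V] {A : V →ₗ[ℂ] V}

lemma mem_cyc_self (A : V →ₗ[ℂ] V) (x : V) : x ∈ cyc A x :=
  subset_span ⟨0, by simp⟩

lemma invSub_cyc (A : V →ₗ[ℂ] V) (x : V) : InvSub A (cyc A x) := by
  rw [InvSub, cyc, map_span, span_le]
  rintro _ ⟨_, ⟨n, rfl⟩, rfl⟩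
  exact subset_span ⟨n + 1, by simp [pow_succ']⟩

lemma cyc_le_of_mem {M : Submodule ℂ V} (hM : InvSub A M) {x : V} (hx : x ∈ M) :
    cyc A x ≤ M := by
  rw [cyc, span_le]
  rintro _ ⟨n, rfl⟩
  induction n with
  | zero => simpa using hx
  | succ n ih =>
    simp only [SetLike.mem_coe, pow_succ', Module.End.mul_apply] at ih ⊢
    exact hM (mem_map_of_mem ih)

lemma invSub_iff_forall_cyc_le {M : Submodule ℂ V} :
    InvSub A M ↔ ∀ x ∈ M, cyc A x ≤ M :=
  ⟨fun hM _ => cyc_le_of_mem hM, fun h => map_le_iff_le_comap.2 fun x hx =>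
    h x hx (invSub_cyc A x (mem_map_of_mem (mem_cyc_self A x)))⟩

lemma isZariskiClosed_setOf_finrank_cyc_lt [FiniteDimensional ℂ V] (A : V →ₗ[ℂ] V)
    (k : ℕ) :
    IsZariskiClosed ℂ {y | Module.finrank ℂ (cyc A y) < k} := by
  have : {y | Module.finrank ℂ (cyc A y) < k} =
      ⋂ s : Fin k → ℕ, {y | ¬LinearIndependent ℂ fun i => (A ^ s i) y} := by
    ext y
    rw [Set.mem_ofPred_eq, ← not_le, cyc, le_finrank_span_range_iff_exists_linearIndependent]
    simp [Function.comp_def]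
  rw [this]
  exact IsZariskiClosed.iInter fun s => isZariskiClosed_setOf_not_linearIndependent _

theorem map_cyc_eq_cyc_apply [FiniteDimensional ℂ V] {T : V →ₗ[ℂ] V}
    (hT : Function.Bijective T) (H : ∀ x : V, InvSub A ((cyc A x).map T)) (x : V) :
    (cyc A x).map T = cyc A (T x) := by
  let e := LinearEquiv.ofBijective T hT
  have hle (y : V) : cyc A (T y) ≤ (cyc A y).map T :=
    cyc_le_of_mem (H y) (mem_map_of_mem (mem_cyc_self A y))
  have hdrop (y : V) : Module.finrank ℂ (cyc A (T y)) ≤ Module.finrank ℂ (cyc A y) :=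
    (finrank_mono (hle y)).trans_eq (e.finrank_map_eq (cyc A y))
  set Z := {y | Module.finrank ℂ (cyc A y) < Module.finrank ℂ (cyc A x)}
  have hZ : e '' Z = Z := (isZariskiClosed_setOf_finrank_cyc_lt A _).image_eq_of_image_subset e
    (by rintro _ ⟨y, hy, rfl⟩; exact (hdrop y).trans_lt hy)
  have hxZ : x ∉ Z := lt_irrefl (Module.finrank ℂ (cyc A x))
  have hTx : T x ∉ Z := fun h => hxZ (e.injective.mem_set_image.1 (by rwa [hZ]))
  refine (eq_of_le_of_finrank_le (hle x) ?_).symm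
  exact (e.finrank_map_eq (cyc A x)).trans_le (not_lt.1 hTx)

end Cyclic

theorem stmt0 {V : Type*} [AddCommGroup V] [Module ℂ V] [FiniteDimensional ℂ V]
    (A T : V →ₗ[ℂ] V) (hT : Function.Bijective T) :
    Col A T ↔ ∀ x : V, InvSub A ((cyc A x).map T) := by
  refine ⟨fun hCol x => (hCol.2 _).1 (invSub_cyc A x), fun H => ⟨hT, fun M => ?_⟩⟩
  simp only [invSub_iff_forall_cyc_le, mem_map, forall_exists_index, and_imp,
    forall_apply_eq_imp_iff₂, ← map_cyc_eq_cyc_apply hT H,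
    map_le_map_iff_of_injective hT.injective]
end

section
/- Let V be a finite-dimensional complex vector space. (1) For every linear subspace 𝒮 of the space of linear endomorphisms of V, Refl(𝒮) ⊆ Alg Lat(𝒮), where Lat(𝒮) is the set of subspaces invariant under every member of 𝒮 and Alg Lat(𝒮) = {T : T M ⊆ M for every M ∈ Lat(𝒮)}. (2) If 𝒜 is a subalgebra of the endomorphism algebra of V containing the identity, then Alg Lat(𝒜) = Refl(𝒜). -/
/-!
If `T` agrees pointwise with members of `𝒮`, then `T x` lies in every `𝒮`-invariant subspace
containing `x`, so `Refl 𝒮 ⊆ AlgLat 𝒮` for any set `𝒮`. Conversely, for a unital algebra `𝒜`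
the orbit `𝒜 x` is an `𝒜`-invariant subspace containing `x = 1 x`; a member `T` of `AlgLat 𝒜`
leaves it invariant, so `T x = A x` for some `A ∈ 𝒜`.
-/

open Submodule

/-- The reflexive cover of a set `𝒮` of linear maps. -/
def Refl {V W : Type*} [AddCommGroup V] [Module ℂ V] [AddCommGroup W] [Module ℂ W]
    (𝒮 : Set (V →ₗ[ℂ] W)) : Set (V →ₗ[ℂ] W) :=
  {T | ∀ x : V, ∃ S ∈ 𝒮, T x = S x}

/-- `Alg Lat 𝒮`: all endomorphisms leaving invariant every subspace which is
invariant under every member of `𝒮`. -/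
def AlgLat {V : Type*} [AddCommGroup V] [Module ℂ V] (𝒮 : Set (V →ₗ[ℂ] V)) :
    Set (V →ₗ[ℂ] V) :=
  {T | ∀ M : Submodule ℂ V, (∀ S ∈ 𝒮, InvSub S M) → InvSub T M}

section

variable {V : Type*} [AddCommGroup V] [Module ℂ V]

theorem refl_subset_algLat (𝒮 : Set (V →ₗ[ℂ] V)) : Refl 𝒮 ⊆ AlgLat 𝒮 := by
  rintro T hT M hM _ ⟨x, hx, rfl⟩
  obtain ⟨S, hS, hTx⟩ := hT x
  rw [hTx]
  exact hM S hS (mem_map_of_mem hx)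

def Subalgebra.orbit (𝒜 : Subalgebra ℂ (Module.End ℂ V)) (x : V) : Submodule ℂ V :=
  (Subalgebra.toSubmodule 𝒜).map (LinearMap.applyₗ x)

theorem Subalgebra.mem_orbit {𝒜 : Subalgebra ℂ (Module.End ℂ V)} {x y : V} :
    y ∈ 𝒜.orbit x ↔ ∃ A ∈ 𝒜, A x = y :=
  Iff.rfl

theorem Subalgebra.self_mem_orbit (𝒜 : Subalgebra ℂ (Module.End ℂ V)) (x : V) :
    x ∈ 𝒜.orbit x :=
  Subalgebra.mem_orbit.2 ⟨1, 𝒜.one_mem, rfl⟩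

theorem Subalgebra.invSub_orbit {𝒜 : Subalgebra ℂ (Module.End ℂ V)} {S : Module.End ℂ V}
    (hS : S ∈ 𝒜) (x : V) : InvSub S (𝒜.orbit x) := by
  rintro _ ⟨_, hy, rfl⟩
  obtain ⟨A, hA, rfl⟩ := Subalgebra.mem_orbit.1 hy
  exact Subalgebra.mem_orbit.2 ⟨S * A, 𝒜.mul_mem hS hA, rfl⟩

theorem Subalgebra.algLat_subset_refl (𝒜 : Subalgebra ℂ (Module.End ℂ V)) :
    AlgLat (𝒜 : Set (V →ₗ[ℂ] V)) ⊆ Refl (𝒜 : Set (V →ₗ[ℂ] V)) := by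
  intro T hT x
  have hTx : T x ∈ 𝒜.orbit x :=
    hT _ (fun S hS => 𝒜.invSub_orbit hS x) (mem_map_of_mem (𝒜.self_mem_orbit x))
  obtain ⟨A, hA, hAx⟩ := Subalgebra.mem_orbit.1 hTx
  exact ⟨A, hA, hAx.symm⟩

end

theorem stmt9_general {V : Type*} [AddCommGroup V] [Module ℂ V] :
    (∀ 𝒮 : Submodule ℂ (V →ₗ[ℂ] V), Refl (𝒮 : Set (V →ₗ[ℂ] V)) ⊆ AlgLat (𝒮 : Set (V →ₗ[ℂ] V))) ∧
    (∀ 𝒜 : Subalgebra ℂ (Module.End ℂ V),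
      AlgLat (𝒜 : Set (V →ₗ[ℂ] V)) = Refl (𝒜 : Set (V →ₗ[ℂ] V))) :=
  ⟨fun _ => refl_subset_algLat _,
    fun 𝒜 => (𝒜.algLat_subset_refl).antisymm (refl_subset_algLat _)⟩

theorem stmt9 {V : Type*} [AddCommGroup V] [Module ℂ V] [FiniteDimensional ℂ V] :
    (∀ 𝒮 : Submodule ℂ (V →ₗ[ℂ] V), Refl (𝒮 : Set (V →ₗ[ℂ] V)) ⊆ AlgLat (𝒮 : Set (V →ₗ[ℂ] V))) ∧
    (∀ 𝒜 : Subalgebra ℂ (Module.End ℂ V),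
      AlgLat (𝒜 : Set (V →ₗ[ℂ] V)) = Refl (𝒜 : Set (V →ₗ[ℂ] V))) :=
  stmt9_general
end

section
/- Let m ≤ n be positive integers and let T be an m×n complex matrix. Then T belongs to Refl((J_m, J_n)^Int), the reflexive cover of the space of intertwiners (J_m, J_n)^Int = {S ∈ M_{m×n}(ℂ) : J_m S = S J_n} (where an m×n matrix acts as a linear map ℂⁿ → ℂᵐ by matrix-vector multiplication), if and only if the first n − m columns of T are zero and the m×m submatrix formed by the last m columns of T is upper triangular. -/
/-!
An intertwiner `S` satisfies `S i j = S (i+1) (j+1)`, and its last row and first column vanish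
except at their ends, so it vanishes below the diagonal shifted by `n - m`; testing against
standard basis vectors `x` transfers this to `T`. Conversely, for fixed `x` the vectors
`S x`, `S` an intertwiner, form a `J_m`-invariant subspace containing `y = (x (n - m + k))_k`.
If `y d` is the last nonzero entry of `y`, then `J_m ^ k y` has its last nonzero entry at `d - k`,
so the subspace contains every vector vanishing beyond `d`, and `T x` is such a vector.
-/

/-- The `n × n` nilpotent Jordan block. -/
def Jmat (n : ℕ) : Matrix (Fin n) (Fin n) ℂ :=
  Matrix.of fun i j => if (j : ℕ) = (i : ℕ) + 1 then 1 else 0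

open Matrix

section

variable {m n : ℕ}

lemma Jmat_mulVec_apply (v : Fin m → ℂ) (i : Fin m) :
    (Jmat m *ᵥ v) i = if h : (i : ℕ) + 1 < m then v ⟨i + 1, h⟩ else 0 := by
  simp only [mulVec, dotProduct, Jmat, of_apply, ite_mul, one_mul, zero_mul]
  split_ifs with h
  · rw [← Fintype.sum_ite_eq' (⟨i + 1, h⟩ : Fin m) v]
    exact Finset.sum_congr rfl fun k _ => if_congr (by rw [Fin.ext_iff]) rfl rfl
  · exact Finset.sum_eq_zero fun k _ => if_neg (by lia)

lemma Jmat_mul_apply (A : Matrix (Fin m) (Fin n) ℂ) (i : Fin m) (j : Fin n) :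
    (Jmat m * A) i j = if h : (i : ℕ) + 1 < m then A ⟨i + 1, h⟩ j else 0 :=
  Jmat_mulVec_apply (fun k => A k j) i

lemma mul_Jmat_apply (A : Matrix (Fin m) (Fin n) ℂ) (i : Fin m) (j : Fin n) :
    (A * Jmat n) i j = if h : 1 ≤ (j : ℕ) then A i ⟨j - 1, by lia⟩ else 0 := by
  simp only [mul_apply, Jmat, of_apply, mul_ite, mul_one, mul_zero]
  split_ifs with h
  · rw [← Fintype.sum_ite_eq' (⟨j - 1, by lia⟩ : Fin n) (A i)]
    exact Finset.sum_congr rfl fun k _ => if_congr (by rw [Fin.ext_iff]; simp only; lia) rfl rfl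
  · exact Finset.sum_eq_zero fun k _ => if_neg (by lia)

lemma vanish_below_shiftedDiag_iff (hmn : m ≤ n) (T : Matrix (Fin m) (Fin n) ℂ) :
    ((∀ (i : Fin m) (j : Fin n), (j : ℕ) < n - m → T i j = 0) ∧
        (∀ i j : Fin m, (j : ℕ) < (i : ℕ) → T i ⟨n - m + (j : ℕ), by lia⟩ = 0)) ↔
      ∀ (i : Fin m) (j : Fin n), (j : ℕ) < n - m + i → T i j = 0 := by
  refine ⟨fun ⟨hleft, hsquare⟩ i j hj => ?_, fun h => ⟨fun i j hj => h i j (by lia),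
    fun i j hij => h i _ (by simp only; lia)⟩⟩
  by_cases hj' : (j : ℕ) < n - m
  · exact hleft i j hj'
  · simpa [show n - m + (j - (n - m)) = j by lia] using
      hsquare i ⟨j - (n - m), by lia⟩ (by simp only; lia)

lemma apply_eq_zero_of_intertwines (hmn : m ≤ n) {S : Matrix (Fin m) (Fin n) ℂ}
    (hS : Jmat m * S = S * Jmat n) (i : Fin m) (j : Fin n) (hj : (j : ℕ) < n - m + i) :
    S i j = 0 := by
  have hshift := congrFun (congrFun hS i) ⟨j + 1, by lia⟩
  simp only [Jmat_mul_apply, mul_Jmat_apply, le_add_iff_nonneg_left, zero_le, dif_pos,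
    add_tsub_cancel_right, Fin.eta] at hshift
  rw [← hshift]
  split_ifs with hi
  · exact apply_eq_zero_of_intertwines hmn hS _ _ (by simp only; lia)
  · rfl
termination_by m - i

def shiftMat (m n : ℕ) : Matrix (Fin m) (Fin n) ℂ :=
  Matrix.of fun i j => if (j : ℕ) = n - m + i then 1 else 0

lemma shiftMat_mulVec_apply (hmn : m ≤ n) (x : Fin n → ℂ) (i : Fin m) :
    (shiftMat m n *ᵥ x) i = x ⟨n - m + i, by lia⟩ := by
  simp only [mulVec, dotProduct, shiftMat, of_apply, ite_mul, one_mul, zero_mul]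
  rw [← Fintype.sum_ite_eq' (⟨n - m + i, by lia⟩ : Fin n) x]
  exact Finset.sum_congr rfl fun k _ => if_congr (by rw [Fin.ext_iff]) rfl rfl

lemma shiftMat_intertwines : Jmat m * shiftMat m n = shiftMat m n * Jmat n := by
  ext i j
  simp only [Jmat_mul_apply, mul_Jmat_apply, shiftMat, of_apply]
  split_ifs <;> first | rfl | lia

variable (m n) in
def intertwinerOrbit (x : Fin n → ℂ) : Submodule ℂ (Fin m → ℂ) where
  carrier := {v | ∃ S : Matrix (Fin m) (Fin n) ℂ, Jmat m * S = S * Jmat n ∧ v = S *ᵥ x}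
  zero_mem' := ⟨0, by simp, by simp⟩
  add_mem' := by
    rintro _ _ ⟨S, hS, rfl⟩ ⟨S', hS', rfl⟩
    exact ⟨S + S', by simp only [Matrix.mul_add, Matrix.add_mul, hS, hS'], (add_mulVec _ _ _).symm⟩
  smul_mem' := by
    rintro c _ ⟨S, hS, rfl⟩
    exact ⟨c • S, by rw [Matrix.mul_smul, Matrix.smul_mul, hS], (smul_mulVec _ _ _).symm⟩

lemma Jmat_mulVec_mem_intertwinerOrbit {x : Fin n → ℂ} {v : Fin m → ℂ}
    (hv : v ∈ intertwinerOrbit m n x) : Jmat m *ᵥ v ∈ intertwinerOrbit m n x := by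
  obtain ⟨S, hS, rfl⟩ := hv
  refine ⟨Jmat m * S, ?_, mulVec_mulVec _ _ _⟩
  rw [Matrix.mul_assoc, ← hS]

def VanishesFrom (d : ℕ) (v : Fin m → ℂ) : Prop :=
  ∀ i : Fin m, d ≤ (i : ℕ) → v i = 0

variable {W : Submodule ℂ (Fin m → ℂ)}

lemma mem_of_vanishesFrom_succ (hW : ∀ v ∈ W, Jmat m *ᵥ v ∈ W) (d : ℕ) (hd : d < m)
    {v : Fin m → ℂ} (hvW : v ∈ W) (hvd : v ⟨d, hd⟩ ≠ 0) (hv : VanishesFrom (d + 1) v)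
    {z : Fin m → ℂ} (hz : VanishesFrom (d + 1) z) : z ∈ W := by
  set c := z ⟨d, hd⟩ / v ⟨d, hd⟩
  have hrest : VanishesFrom d (z - c • v) := by
    intro i hi
    rcases hi.eq_or_lt with rfl | hi
    · simp [c, hvd]
    · simp [hz i hi, hv i hi]
  suffices z - c • v ∈ W by simpa using W.add_mem this (W.smul_mem c hvW)
  cases d with
  | zero =>
    rw [show z - c • v = 0 from funext fun i => hrest i (Nat.zero_le _)]
    exact W.zero_mem
  | succ d =>
    refine mem_of_vanishesFrom_succ hW d (by lia) (hW v hvW) ?_ ?_ hrest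
    · simpa [Jmat_mulVec_apply, hd] using hvd
    · intro i hi
      rw [Jmat_mulVec_apply]
      split_ifs
      · exact hv _ (by simp only; lia)
      · rfl

lemma mem_of_forall_vanishesFrom_imp (hW : ∀ v ∈ W, Jmat m *ᵥ v ∈ W) {v z : Fin m → ℂ}
    (hvW : v ∈ W) (hvz : ∀ d, VanishesFrom d v → VanishesFrom d z) : z ∈ W := by
  classical
  have hex : ∃ d, VanishesFrom d v := ⟨m, fun i hi => absurd i.isLt (by lia)⟩
  obtain ⟨d, hv, hmin⟩ : ∃ d, VanishesFrom d v ∧ ∀ e < d, ¬ VanishesFrom e v :=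
    ⟨Nat.find hex, Nat.find_spec hex, fun e => Nat.find_min hex⟩
  cases d with
  | zero =>
    rw [show z = 0 from funext fun i => hvz 0 hv i (Nat.zero_le _)]
    exact W.zero_mem
  | succ d =>
    have hd : d < m := by
      by_contra! hd
      exact hmin d (by lia) fun i hi => absurd i.isLt (by lia)
    refine mem_of_vanishesFrom_succ hW d hd hvW (fun hvd => hmin d (by lia) ?_) hv (hvz _ hv)
    intro i hi
    rcases hi.eq_or_lt with rfl | hi
    · exact hvd
    · exact hv i hi

lemma vanishesFrom_mulVec {T : Matrix (Fin m) (Fin n) ℂ}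
    (hT : ∀ (i : Fin m) (j : Fin n), (j : ℕ) < n - m + i → T i j = 0) {x : Fin n → ℂ} {d : ℕ}
    (hx : ∀ j : Fin n, n - m + d ≤ (j : ℕ) → x j = 0) : VanishesFrom d (T *ᵥ x) := by
  intro i hi
  simp only [mulVec, dotProduct]
  refine Finset.sum_eq_zero fun j _ => ?_
  by_cases hj : (j : ℕ) < n - m + i
  · rw [hT i j hj, zero_mul]
  · rw [hx j (by lia), mul_zero]

end

theorem stmt11 (m n : ℕ) (hmn : m ≤ n) (T : Matrix (Fin m) (Fin n) ℂ) :
    (∀ x : Fin n → ℂ, ∃ S : Matrix (Fin m) (Fin n) ℂ,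
        Jmat m * S = S * Jmat n ∧ T.mulVec x = S.mulVec x) ↔
      ((∀ (i : Fin m) (j : Fin n), (j : ℕ) < n - m → T i j = 0) ∧
        (∀ i j : Fin m, (j : ℕ) < (i : ℕ) → T i ⟨n - m + (j : ℕ), by omega⟩ = 0)) := by
  rw [vanish_below_shiftedDiag_iff hmn]
  constructor
  · intro H i j hj
    obtain ⟨S, hS, hTS⟩ := H (Pi.single j 1)
    have hcol : T i j = S i j := by simpa using congrFun hTS i
    exact hcol ▸ apply_eq_zero_of_intertwines hmn hS i j hj
  · intro hT x
    refine mem_of_forall_vanishesFrom_imp (fun _ => Jmat_mulVec_mem_intertwinerOrbit)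
      ⟨shiftMat m n, shiftMat_intertwines, rfl⟩ fun d hd => vanishesFrom_mulVec hT fun j hj => ?_
    simpa [shiftMat_mulVec_apply hmn, show n - m + (j - (n - m)) = j by lia] using
      hd ⟨j - (n - m), by lia⟩ (by simp only; lia)
end

section
/- Let V be a finite-dimensional complex vector space, let N be a nilpotent linear endomorphism of V, and let T ∈ Col(N). Then for every x ∈ V there exists a linear endomorphism B of V commuting with N such that T x = B x. -/
/-
Since `T` permutes the lattice of `N`-invariant subspaces, it preserves every subspace that this
lattice singles out. For nilpotent `N` and invariant `W`, the image `N W` is the least `M` such that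
every subspace between `M ⊓ W` and `W` is invariant, and `N⁻¹ W` is then recovered from images;
hence `T` fixes each `N^s V ⊓ ker N^t`. In a Jordan basis, the component of `x` in a block
`ℂ[X]/(X^e)` is `X^s` times a unit, so any vector of `N^s V ⊓ ker N^(e-s)` is the image of `x`
under a map commuting with `N`. Thus `x` lies in a sum of subspaces `N^s V ⊓ ker N^t`, all contained
in `{B x | B ∈ (N)'}`, and `T x` lies in the same sum.
-/

open Submodule

section Transport

variable {V : Type*} [AddCommGroup V] [Module ℂ V] {N T : V →ₗ[ℂ] V} {W : Submodule ℂ V}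

theorem map_le_iff_forall_invSub (hN : IsNilpotent N) (hW : InvSub N W) (M : Submodule ℂ V) :
    W.map N ≤ M ↔ ∀ K, M ⊓ W ≤ K → K ≤ W → InvSub N K := by
  refine ⟨fun h K hMK hKW => (map_mono hKW).trans ((le_inf h hW).trans hMK), fun h => ?_⟩
  have hM₀ : InvSub N (M ⊓ W) := h _ le_rfl inf_le_right
  rintro _ ⟨w, hw, rfl⟩
  have hNw : N w ∈ M ⊓ W ⊔ ℂ ∙ w :=
    h _ le_sup_left (sup_le inf_le_right ((span_singleton_le_iff_mem _ _).2 hw))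
      (mem_map_of_mem (mem_sup_right (mem_span_singleton_self w)))
  obtain ⟨m, hm, _, hcw, hmc⟩ := mem_sup.1 hNw
  obtain ⟨c, rfl⟩ := mem_span_singleton.1 hcw
  -- `w` is an eigenvector of `N` modulo `M ⊓ W`; nilpotency kills its eigenvalue `c`
  -- unless `w ∈ M ⊓ W`.
  have hpow : ∀ k : ℕ, (N ^ k) w - c ^ k • w ∈ M ⊓ W := by
    intro k
    induction k with
    | zero => simp
    | succ k ih =>
      have : (N ^ (k + 1)) w - c ^ (k + 1) • w = N ((N ^ k) w - c ^ k • w) + c ^ k • m := by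
        rw [pow_succ', Module.End.mul_apply, map_sub, map_smul, ← hmc]
        module
      rw [this]
      exact add_mem (hM₀ (mem_map_of_mem ih)) (smul_mem _ _ hm)
  obtain ⟨n, hn⟩ := hN
  have hcw : c ^ n • w ∈ M ⊓ W := by simpa [hn] using hpow n
  by_cases hc : c = 0
  · subst hc
    simp only [zero_smul, add_zero] at hmc
    exact hmc ▸ (mem_inf.1 hm).1
  · have hwM : w ∈ M ⊓ W := (smul_mem_iff _ (pow_ne_zero n hc)).1 hcw
    exact (mem_inf.1 (hM₀ (mem_map_of_mem hwM))).1

theorem Col.map_map_comm (hT : Col N T) (hN : IsNilpotent N) (hW : InvSub N W) :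
    (W.map N).map T = (W.map T).map N := by
  set φ := Submodule.orderIsoMapComap (LinearEquiv.ofBijective T hT.1)
  have hφ : ∀ K, φ K = K.map T := fun K => rfl
  refine eq_of_forall_ge_iff fun M' => ?_
  obtain ⟨M, rfl⟩ := φ.surjective M'
  rw [← hφ, φ.le_iff_le, ← hφ, map_le_iff_forall_invSub hN hW,
    map_le_iff_forall_invSub hN (W := φ W) ((hT.2 W).1 hW)]
  refine φ.toEquiv.forall_congr fun K => ?_
  change _ ↔ (φ M ⊓ φ W ≤ φ K → φ K ≤ φ W → InvSub N (φ K))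
  rw [← φ.map_inf, φ.le_iff_le, φ.le_iff_le, hφ K, ← hT.2]

theorem invSub_comap (hW : InvSub N W) : InvSub N (W.comap N) :=
  map_le_iff_le_comap.2 fun _ hv => hW (mem_map_of_mem hv)

theorem Col.map_comap_comm (hT : Col N T) (hN : IsNilpotent N) (hW : InvSub N W) :
    (W.comap N).map T = (W.map T).comap N := by
  refine le_antisymm ?_ ?_
  · rw [← map_le_iff_le_comap, ← hT.map_map_comm hN (invSub_comap hW)]
    exact map_mono (map_comap_le N W)
  · set K := ((W.map T).comap N).comap T
    have hK : K.map T = (W.map T).comap N := map_comap_eq_of_surjective hT.1.2 _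
    have hKinv : InvSub N K := (hT.2 K).2 (hK ▸ invSub_comap ((hT.2 W).1 hW))
    rw [← hK]
    refine map_mono (map_le_iff_le_comap.1 ?_)
    rw [← map_le_map_iff_of_injective hT.1.1, hT.map_map_comm hN hKinv, hK]
    exact map_comap_le _ _

theorem Col.map_map_pow_comm (hT : Col N T) (hN : IsNilpotent N) (hW : InvSub N W) (j : ℕ) :
    (W.map (N ^ j)).map T = (W.map T).map (N ^ j) := by
  induction j generalizing W with
  | zero => simp [Module.End.one_eq_id]
  | succ j ih =>
    rw [pow_succ, Module.End.mul_eq_comp, map_comp, map_comp, ih (map_mono hW),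
      hT.map_map_comm hN hW]

theorem Col.map_comap_pow_comm (hT : Col N T) (hN : IsNilpotent N) (hW : InvSub N W) (j : ℕ) :
    (W.comap (N ^ j)).map T = (W.map T).comap (N ^ j) := by
  induction j generalizing W with
  | zero => simp [Module.End.one_eq_id]
  | succ j ih =>
    rw [pow_succ', Module.End.mul_eq_comp, comap_comp, comap_comp, ih (invSub_comap hW),
      hT.map_comap_comm hN hW]

end Transport

def rangeInfKer {R M : Type*} [Semiring R] [AddCommMonoid M] [Module R M] (f : M →ₗ[R] M)
    (s t : ℕ) : Submodule R M :=
  LinearMap.range (f ^ s) ⊓ LinearMap.ker (f ^ t)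

theorem Col.map_rangeInfKer {V : Type*} [AddCommGroup V] [Module ℂ V] {N T : V →ₗ[ℂ] V}
    (hT : Col N T) (hN : IsNilpotent N) (s t : ℕ) :
    (rangeInfKer N s t).map T = rangeInfKer N s t := by
  have htop : (⊤ : Submodule ℂ V).map T = ⊤ := by
    rw [Submodule.map_top, LinearMap.range_eq_top.2 hT.1.2]
  rw [rangeInfKer, map_inf _ hT.1.1, ← Submodule.map_top, ← comap_bot,
    hT.map_map_pow_comm hN le_top, hT.map_comap_pow_comm hN (by simp [InvSub]), htop,
    Submodule.map_bot]

def commutantOrbit {R M : Type*} [CommSemiring R] [AddCommMonoid M] [Module R M]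
    (f : M →ₗ[R] M) (x : M) : Submodule R M :=
  (Subalgebra.centralizer R {f}).toSubmodule.map (LinearMap.applyₗ x)

theorem mem_commutantOrbit {R M : Type*} [CommSemiring R] [AddCommMonoid M] [Module R M]
    {f : M →ₗ[R] M} {x y : M} :
    y ∈ commutantOrbit f x ↔ ∃ B : M →ₗ[R] M, B ∘ₗ f = f ∘ₗ B ∧ B x = y := by
  simp [commutantOrbit, Subalgebra.mem_centralizer_iff, Module.End.mul_eq_comp, eq_comm]

open Polynomial
open scoped DirectSum

theorem exists_X_pow_smul_eq_and_lift {K M : Type*} [Field K] [AddCommGroup M] [Module K[X] M]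
    (e : ℕ) (ξ : K[X] ⧸ K[X] ∙ (X ^ e : K[X])) :
    ∃ s t : ℕ, ((∃ η, (X ^ s : K[X]) • η = ξ) ∧ (X ^ t : K[X]) • ξ = 0) ∧
      ∀ y : M, (∃ u, (X ^ s : K[X]) • u = y) → (X ^ t : K[X]) • y = 0 →
        ∃ f : (K[X] ⧸ K[X] ∙ (X ^ e : K[X])) →ₗ[K[X]] M, f ξ = y := by
  obtain ⟨p, rfl⟩ := Submodule.Quotient.mk_surjective _ ξ
  by_cases hp : (Submodule.Quotient.mk p : K[X] ⧸ K[X] ∙ (X ^ e : K[X])) = 0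
  · -- `t = 0` makes the condition on `y` read `y = 0`
    refine ⟨0, 0, ⟨⟨_, one_smul _ _⟩, by rw [pow_zero, one_smul, hp]⟩, fun y _ hy => ?_⟩
    rw [pow_zero, one_smul] at hy
    exact ⟨0, by rw [hp, hy, map_zero]⟩
  have hp0 : p ≠ 0 := by rintro rfl; exact hp (Submodule.Quotient.mk_zero _)
  obtain ⟨q, hpq, hq⟩ := p.exists_eq_pow_rootMultiplicity_mul_and_not_dvd hp0 0
  rw [map_zero, sub_zero] at hpq hq
  set s := p.rootMultiplicity 0
  have hse : s ≤ e := by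
    by_contra! hes
    refine hp ((Submodule.Quotient.mk_eq_zero _).2 (mem_span_singleton.2 ⟨X ^ (s - e) * q, ?_⟩))
    rw [hpq, smul_eq_mul, mul_right_comm, ← pow_add, Nat.sub_add_cancel hes.le]
  obtain ⟨a, b, hab⟩ : IsCoprime (X ^ e : K[X]) q :=
    ((irreducible_X.coprime_iff_not_dvd).2 hq).pow_left
  refine ⟨s, e - s, ⟨⟨Submodule.Quotient.mk q, by
    rw [← Submodule.Quotient.mk_smul, smul_eq_mul, hpq]⟩, ?_⟩, ?_⟩
  · rw [← Submodule.Quotient.mk_smul, Submodule.Quotient.mk_eq_zero, hpq, smul_eq_mul,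
      ← mul_assoc, ← pow_add, Nat.sub_add_cancel hse]
    exact mem_span_singleton.2 ⟨q, by rw [smul_eq_mul, mul_comm]⟩
  rintro y ⟨u, rfl⟩ hy
  have hu : (X ^ e : K[X]) • u = 0 := by
    rwa [smul_smul, ← pow_add, Nat.sub_add_cancel hse] at hy
  -- `b` inverts `q` modulo `X ^ e`, so `1 ↦ b • u` sends `X ^ s * q` to `X ^ s • u`
  refine ⟨liftQ _ (LinearMap.toSpanSingleton K[X] M (b • u)) ?_, ?_⟩
  · rw [span_singleton_le_iff_mem, LinearMap.mem_ker, LinearMap.toSpanSingleton_apply,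
      smul_comm, hu, smul_zero]
  · rw [liftQ_apply, LinearMap.toSpanSingleton_apply, hpq]
    linear_combination (norm := module) hab • ((X ^ s : K[X]) • u) - (a * X ^ s : K[X]) • hu

theorem exists_linearEquiv_directSum_quot_X_pow {K V : Type*} [Field K] [AddCommGroup V]
    [Module K V] [FiniteDimensional K V] {N : V →ₗ[K] V} (hN : IsNilpotent N) :
    ∃ (d : ℕ) (e : Fin d → ℕ) (φ : V ≃ₗ[K] ⨁ i : Fin d, K[X] ⧸ K[X] ∙ (X ^ e i : K[X])),
      ∀ v, φ (N v) = (X : K[X]) • φ v := by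
  obtain ⟨n, hn⟩ := hN
  have htors : Module.IsTorsion' (Module.AEval' N) (Submonoid.powers (X : K[X])) := by
    intro m
    obtain ⟨v, rfl⟩ := (Module.AEval'.of N).surjective m
    refine ⟨⟨X ^ n, (Submonoid.mem_powers_iff _ _).2 ⟨n, rfl⟩⟩, ?_⟩
    rw [Submonoid.mk_smul, Module.AEval'.X_pow_smul_of, hn, zero_smul, map_zero]
  obtain ⟨d, e, ⟨ψ⟩⟩ := Module.torsion_by_prime_power_decomposition irreducible_X htors
  refine ⟨d, e, (Module.AEval'.of N).trans (ψ.restrictScalars K), fun v => ?_⟩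
  simp [← Module.AEval'.X_smul_of]

theorem symm_apply_mem_commutantOrbit {K V M : Type*} [Field K] [AddCommGroup V] [Module K V]
    [AddCommGroup M] [Module K[X] M] [Module K M] [IsScalarTower K K[X] M] {N : V →ₗ[K] V}
    (φ : V ≃ₗ[K] M) (hφ : ∀ v, φ (N v) = (X : K[X]) • φ v) (f : M →ₗ[K[X]] M) (x : V) :
    φ.symm (f (φ x)) ∈ commutantOrbit N x := by
  refine mem_commutantOrbit.2
    ⟨φ.symm.toLinearMap ∘ₗ f.restrictScalars K ∘ₗ φ.toLinearMap, ?_, rfl⟩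
  ext v
  apply φ.injective
  simp [hφ]

theorem exists_mem_iSup_rangeInfKer_le_commutantOrbit {K V : Type*} [Field K] [AddCommGroup V]
    [Module K V] [FiniteDimensional K V] {N : V →ₗ[K] V} (hN : IsNilpotent N) (x : V) :
    ∃ (d : ℕ) (s t : Fin d → ℕ), x ∈ ⨆ i, rangeInfKer N (s i) (t i) ∧
      ∀ i, rangeInfKer N (s i) (t i) ≤ commutantOrbit N x := by
  obtain ⟨d, e, φ, hφ⟩ := exists_linearEquiv_directSum_quot_X_pow hN
  have hφpow : ∀ k v, φ ((N ^ k) v) = (X ^ k : K[X]) • φ v := by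
    intro k v
    induction k with
    | zero => simp
    | succ k ih => rw [pow_succ', Module.End.mul_apply, hφ, ih, pow_succ', mul_smul]
  have hmem : ∀ s t v, v ∈ rangeInfKer N s t ↔
      (∃ u, (X ^ s : K[X]) • u = φ v) ∧ (X ^ t : K[X]) • φ v = 0 := by
    intro s t v
    rw [rangeInfKer, mem_inf, LinearMap.mem_range, LinearMap.mem_ker, ← hφpow,
      φ.map_eq_zero_iff]
    refine and_congr_left' ⟨fun ⟨w, hw⟩ => ⟨φ w, by rw [← hφpow, hw]⟩, fun ⟨u, hu⟩ =>
      ⟨φ.symm u, φ.injective (by rw [hφpow, φ.apply_symm_apply, hu])⟩⟩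
  let Q := fun i => K[X] ⧸ K[X] ∙ (X ^ e i : K[X])
  choose s t hξ hext using fun i => exists_X_pow_smul_eq_and_lift (M := ⨁ i, Q i) (e i) (φ x i)
  refine ⟨d, s, t, ?_, fun i y hy => ?_⟩
  · rw [← φ.symm_apply_apply x, ← DirectSum.sum_univ_of (φ x), map_sum]
    refine sum_mem fun i _ => mem_iSup_of_mem i ((hmem _ _ _).2 ?_)
    obtain ⟨⟨η, hη⟩, hξ0⟩ := hξ i
    rw [φ.apply_symm_apply, ← DirectSum.lof_eq_of K[X], ← map_smul, hξ0, map_zero]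
    exact ⟨⟨DirectSum.lof K[X] _ _ i η, by rw [← map_smul, hη]⟩, rfl⟩
  · obtain ⟨hu, hy0⟩ := (hmem _ _ y).1 hy
    obtain ⟨f, hf⟩ := hext i (φ y) hu hy0
    have := symm_apply_mem_commutantOrbit (K := K) (M := ⨁ i, Q i) φ hφ
      (f ∘ₗ DirectSum.component K[X] (Fin d) Q i) x
    rwa [LinearMap.comp_apply, ← DirectSum.apply_eq_component, hf, φ.symm_apply_apply] at this

theorem stmt14 {V : Type*} [AddCommGroup V] [Module ℂ V] [FiniteDimensional ℂ V]
    (N T : V →ₗ[ℂ] V) (hN : IsNilpotent N) (hT : Col N T) :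
    ∀ x : V, ∃ B : V →ₗ[ℂ] V, B ∘ₗ N = N ∘ₗ B ∧ T x = B x := by
  intro x
  obtain ⟨d, s, t, hx, hle⟩ := exists_mem_iSup_rangeInfKer_le_commutantOrbit hN x
  have hTx : T x ∈ ⨆ i, rangeInfKer N (s i) (t i) := by
    rw [← iSup_congr fun i => hT.map_rangeInfKer hN (s i) (t i), ← Submodule.map_iSup]
    exact mem_map_of_mem hx
  obtain ⟨B, hB, hBx⟩ := mem_commutantOrbit.1 (iSup_le hle hTx)
  exact ⟨B, hB, hBx.symm⟩
end

section
/- Let V be a finite-dimensional complex vector space, let N be a nilpotent linear endomorphism of V, let T be a bijective linear endomorphism of V belonging to Alg Lat(N)', and let M be a hyperinvariant subspace of N. Then T maps the interval [M, N⁻¹(M)] onto itself: the set of images {T P : P a subspace with M ⊆ P ⊆ N⁻¹(M)} equals the set {P : M ⊆ P ⊆ N⁻¹(M)}, where N⁻¹(M) denotes the preimage of M under N. -/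
open Submodule

/-- `M` is a hyperinvariant subspace of `N`: it is invariant under every
endomorphism commuting with `N`. -/
def Hyp {V : Type*} [AddCommGroup V] [Module ℂ V] (N : V →ₗ[ℂ] V)
    (M : Submodule ℂ V) : Prop :=
  ∀ B : V →ₗ[ℂ] V, B ∘ₗ N = N ∘ₗ B → M.map B ≤ M

/-! An injective endomorphism of a finite-dimensional space that maps a subspace into itself maps
it onto itself. Hence `T` fixes the hyperinvariant subspaces `M` and `N⁻¹(M)`, and a bijection
fixing both ends of an interval of subspaces permutes the interval. -/

theorem Hyp.comap_self {V : Type*} [AddCommGroup V] [Module ℂ V] {N : V →ₗ[ℂ] V}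
    {M : Submodule ℂ V} (hM : Hyp N M) : Hyp N (M.comap N) := by
  rintro B hB _ ⟨y, hy, rfl⟩
  have hcomm : N (B y) = B (N y) := (LinearMap.congr_fun hB y).symm
  rw [mem_comap, hcomm]
  exact hM B hB (mem_map_of_mem hy)

theorem Submodule.map_eq_of_map_le_of_injective {K V : Type*} [DivisionRing K] [AddCommGroup V]
    [Module K V] [FiniteDimensional K V] {T : V →ₗ[K] V} (hT : Function.Injective T)
    {W : Submodule K V} (hW : W.map T ≤ W) : W.map T = W :=
  eq_of_le_of_finrank_le hW (equivMapOfInjective T hT W).finrank_eq.le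

theorem Submodule.image_map_Icc_of_map_eq {R V : Type*} [Semiring R] [AddCommMonoid V]
    [Module R V] {T : V →ₗ[R] V} (hT : Function.Bijective T) {A B : Submodule R V}
    (hA : A.map T = A) (hB : B.map T = B) :
    {Q : Submodule R V | ∃ P : Submodule R V, A ≤ P ∧ P ≤ B ∧ Q = P.map T} =
      {P : Submodule R V | A ≤ P ∧ P ≤ B} := by
  ext Q
  constructor
  · rintro ⟨P, hAP, hPB, rfl⟩
    exact ⟨hA ▸ map_mono hAP, hB ▸ map_mono hPB⟩
  · rintro ⟨hAQ, hQB⟩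
    refine ⟨Q.comap T, ?_, ?_, (map_comap_eq_of_surjective hT.surjective Q).symm⟩
    · rw [← map_le_iff_le_comap, hA]
      exact hAQ
    · rw [← comap_map_eq_of_injective hT.injective B, hB]
      exact comap_mono hQB

theorem stmt16_general {V : Type*} [AddCommGroup V] [Module ℂ V] [FiniteDimensional ℂ V]
    (N T : V →ₗ[ℂ] V) (hT : Function.Bijective T)
    (hTAlg : ∀ M : Submodule ℂ V, Hyp N M → M.map T ≤ M)
    (M : Submodule ℂ V) (hM : Hyp N M) :
    {Q : Submodule ℂ V | ∃ P : Submodule ℂ V, M ≤ P ∧ P ≤ M.comap N ∧ Q = P.map T} =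
      {P : Submodule ℂ V | M ≤ P ∧ P ≤ M.comap N} := by
  have hfix : ∀ W : Submodule ℂ V, Hyp N W → W.map T = W := fun W hW =>
    map_eq_of_map_le_of_injective hT.injective (hTAlg W hW)
  exact image_map_Icc_of_map_eq hT (hfix M hM) (hfix _ hM.comap_self)

theorem stmt16 {V : Type*} [AddCommGroup V] [Module ℂ V] [FiniteDimensional ℂ V]
    (N T : V →ₗ[ℂ] V) (hN : IsNilpotent N) (hT : Function.Bijective T)
    (hTAlg : ∀ M : Submodule ℂ V, Hyp N M → M.map T ≤ M)
    (M : Submodule ℂ V) (hM : Hyp N M) :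
    {Q : Submodule ℂ V | ∃ P : Submodule ℂ V, M ≤ P ∧ P ≤ M.comap N ∧ Q = P.map T} =
      {P : Submodule ℂ V | M ≤ P ∧ P ≤ M.comap N} :=
  stmt16_general N T hT hTAlg M hM
end

section
/- Let N = J_2 ⊕ J_2 be the 4×4 complex matrix whose only nonzero entries are the (1,2)-entry and the (3,4)-entry, both equal to 1, regarded as a linear endomorphism of ℂ⁴ via matrix-vector multiplication. Then a 4×4 complex matrix T (acting on ℂ⁴ by matrix-vector multiplication) belongs to Col(N) if and only if there exist complex numbers t, γ₁₁, γ₁₂, γ₁₃, γ₁₄, γ₃₁, γ₃₂, γ₃₃, γ₃₄ with t·(γ₁₁γ₃₃ − γ₁₃γ₃₁) ≠ 0 such that T has rows (γ₁₁, γ₁₂, γ₁₃, γ₁₄), (0, tγ₁₁, 0, tγ₁₃), (γ₃₁, γ₃₂, γ₃₃, γ₃₄), (0, tγ₃₁, 0, tγ₃₃). -/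
open Submodule

/-! Applying `T ∈ Col(A)` to the invariant subspaces `span {v}` (for `A v = 0`) and
`span {v, A v}` shows, for a square-zero `A`, that `A (T v) = b_v • T (A v)` for every `v`.
Comparing `v`, `w` and `v + w` makes `b_v` independent of `v` as soon as `A v, A w` are
independent; for `N = J₂ ⊕ J₂` this gives `N T = t T N`, which forces the displayed shape,
and `det T = (t (γ₁₁ γ₃₃ - γ₁₃ γ₃₁))²`. Conversely, a bijective `T` with `N T = t T N`,
`t ≠ 0`, maps `N`-invariant subspaces exactly onto `N`-invariant subspaces. -/

section General

variable {V : Type*} [AddCommGroup V] [Module ℂ V] {A T : V →ₗ[ℂ] V}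

lemma invSub_span_of_forall {s : Set V} (h : ∀ x ∈ s, A x ∈ span ℂ s) :
    InvSub A (span ℂ s) := by
  rw [InvSub, map_span, span_le]
  rintro _ ⟨x, hx, rfl⟩
  exact h x hx

lemma InvSub.apply_mem {M : Submodule ℂ V} (h : InvSub A M) {x : V} (hx : x ∈ M) : A x ∈ M :=
  h (mem_map_of_mem hx)

lemma col_of_comp_eq_smul_comp {t : ℂ} (hT : Function.Bijective T) (ht : t ≠ 0)
    (h : A ∘ₗ T = t • (T ∘ₗ A)) : Col A T := by
  refine ⟨hT, fun M => ?_⟩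
  rw [InvSub, InvSub, ← map_comp, h, Submodule.map_smul _ _ _ ht, map_comp,
    map_le_map_iff_of_injective hT.1]

variable (hA : ∀ v, A (A v) = 0) (hT : Col A T)
include hA hT

lemma Col.apply_eq_zero_of_apply_eq_zero {v : V} (hv : A v = 0) : A (T v) = 0 := by
  have hinv : InvSub A (span ℂ {T v}) := by
    simpa [map_span] using
      (hT.2 _).1 (invSub_span_of_forall (by simp [hv] : ∀ x ∈ ({v} : Set V), A x ∈ _))
  obtain ⟨a, ha⟩ := mem_span_singleton.1 (hinv.apply_mem (mem_span_singleton_self (T v)))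
  -- `T v` is an eigenvector of the square-zero map `A`, so its eigenvalue vanishes
  have : (a * a) • T v = 0 := by
    rw [mul_smul, ha, ← map_smul, ha, hA]
  rcases smul_eq_zero.1 this with h | h
  · rw [← ha, mul_self_eq_zero.1 h, zero_smul]
  · rw [h, map_zero]

lemma Col.exists_apply_eq_smul (v : V) : ∃ b : ℂ, A (T v) = b • T (A v) := by
  have hinv : InvSub A (span ℂ {T v, T (A v)}) := by
    simpa [map_span, Set.image_pair] using (hT.2 _).1 (invSub_span_of_forall (by
      rintro x (rfl | rfl)
      · exact subset_span (by simp)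
      · simp [hA] : ∀ x ∈ ({v, A v} : Set V), A x ∈ _))
  obtain ⟨a, b, hab⟩ := mem_span_pair.1 (hinv.apply_mem (subset_span (Set.mem_insert _ _)))
  have hAT : A (T (A v)) = 0 := hT.apply_eq_zero_of_apply_eq_zero hA (hA v)
  have : a • A (T v) = 0 := by
    simpa [hAT, hA] using congrArg A hab
  rcases smul_eq_zero.1 this with rfl | h
  · exact ⟨b, by simpa using hab.symm⟩
  · exact ⟨0, by simp [h]⟩

lemma Col.exists_apply_eq_smul_pair {v w : V} (hvw : LinearIndependent ℂ ![A v, A w]) :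
    ∃ c : ℂ, A (T v) = c • T (A v) ∧ A (T w) = c • T (A w) := by
  obtain ⟨b, hb⟩ := hT.exists_apply_eq_smul hA v
  obtain ⟨b', hb'⟩ := hT.exists_apply_eq_smul hA w
  obtain ⟨c, hc⟩ := hT.exists_apply_eq_smul hA (v + w)
  have : (b - c) • A v + (b' - c) • A w = 0 := by
    apply hT.1.1
    rw [map_add, map_add, hb, hb', map_add, map_add, smul_add] at hc
    rw [map_zero, map_add, map_smul, map_smul]
    linear_combination (norm := module) hc
  obtain ⟨h, h'⟩ := LinearIndependent.pair_iff.1 hvw _ _ this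
  exact ⟨c, by rwa [← sub_eq_zero.1 h], by rwa [← sub_eq_zero.1 h']⟩

end General

lemma Matrix.bijective_mulVecLin_iff {n K : Type*} [Fintype n] [DecidableEq n] [Field K]
    (M : Matrix n n K) : Function.Bijective M.mulVecLin ↔ M.det ≠ 0 := by
  rw [Matrix.coe_mulVecLin, Function.Bijective, Matrix.mulVec_injective_iff_isUnit,
    Matrix.mulVec_surjective_iff_isUnit, and_self, Matrix.isUnit_iff_isUnit_det,
    isUnit_iff_ne_zero]

lemma Matrix.mulVecLin_comp_eq_smul_comp_iff {n K : Type*} [Fintype n] [DecidableEq n]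
    [Field K] (M T : Matrix n n K) (t : K) :
    M.mulVecLin ∘ₗ T.mulVecLin = t • (T.mulVecLin ∘ₗ M.mulVecLin) ↔ M * T = t • (T * M) := by
  rw [← Matrix.mulVecLin_mul, ← Matrix.mulVecLin_mul, ← Matrix.toLin'_apply',
    ← Matrix.toLin'_apply', ← map_smul, Matrix.toLin'.injective.eq_iff]

section JordanTwoTwo

open Matrix

def jordanTwoTwo : Matrix (Fin 4) (Fin 4) ℂ :=
  Matrix.of ![![0, 1, 0, 0], ![0, 0, 0, 0], ![0, 0, 0, 1], ![0, 0, 0, 0]]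

lemma jordanTwoTwo_mulVec (v : Fin 4 → ℂ) : jordanTwoTwo *ᵥ v = ![v 1, 0, v 3, 0] := by
  ext i
  fin_cases i <;> simp [jordanTwoTwo, Matrix.mulVec, dotProduct, Fin.sum_univ_four]

lemma jordanTwoTwo_mulVec_mulVec (v : Fin 4 → ℂ) :
    jordanTwoTwo *ᵥ (jordanTwoTwo *ᵥ v) = 0 := by
  ext i
  fin_cases i <;> simp [jordanTwoTwo_mulVec]

lemma jordanTwoTwo_mul_eq_smul_mul_iff (T : Matrix (Fin 4) (Fin 4) ℂ) (t : ℂ) :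
    jordanTwoTwo * T = t • (T * jordanTwoTwo) ↔
      ∃ γ₁₁ γ₁₂ γ₁₃ γ₁₄ γ₃₁ γ₃₂ γ₃₃ γ₃₄ : ℂ,
        T = Matrix.of ![![γ₁₁, γ₁₂, γ₁₃, γ₁₄],
                        ![0, t * γ₁₁, 0, t * γ₁₃],
                        ![γ₃₁, γ₃₂, γ₃₃, γ₃₄],
                        ![0, t * γ₃₁, 0, t * γ₃₃]] := by
  constructor
  · intro h
    refine ⟨T 0 0, T 0 1, T 0 2, T 0 3, T 2 0, T 2 1, T 2 2, T 2 3, ?_⟩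
    ext i j
    -- row `i - 1` of `jordanTwoTwo * T` is row `i` of `T` for odd `i`
    have := congrFun (congrFun h (i - 1)) j
    fin_cases i <;> fin_cases j <;> simp_all [jordanTwoTwo, Matrix.mul_apply, Fin.sum_univ_four]
  · rintro ⟨γ₁₁, γ₁₂, γ₁₃, γ₁₄, γ₃₁, γ₃₂, γ₃₃, γ₃₄, rfl⟩
    ext i j
    fin_cases i <;> fin_cases j <;> simp [jordanTwoTwo, Matrix.mul_apply, Fin.sum_univ_four]

lemma det_twistedCommutantForm (t γ₁₁ γ₁₂ γ₁₃ γ₁₄ γ₃₁ γ₃₂ γ₃₃ γ₃₄ : ℂ) :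
    (Matrix.of ![![γ₁₁, γ₁₂, γ₁₃, γ₁₄],
                ![0, t * γ₁₁, 0, t * γ₁₃],
                ![γ₃₁, γ₃₂, γ₃₃, γ₃₄],
                ![0, t * γ₃₁, 0, t * γ₃₃]]).det = (t * (γ₁₁ * γ₃₃ - γ₁₃ * γ₃₁)) ^ 2 := by
  simp [Matrix.det_succ_row_zero, Fin.sum_univ_succ, Fin.succAbove,
    Fin.castSucc, Fin.castAdd, Fin.castLE, -Fin.val_fin_lt]
  ring

lemma Col.exists_jordanTwoTwo_mul_eq_smul_mul {T : Matrix (Fin 4) (Fin 4) ℂ}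
    (hT : Col jordanTwoTwo.mulVecLin T.mulVecLin) :
    ∃ t : ℂ, jordanTwoTwo * T = t • (T * jordanTwoTwo) := by
  set A := jordanTwoTwo.mulVecLin
  have hA : ∀ v, A (A v) = 0 := jordanTwoTwo_mulVec_mulVec
  have hA_apply (v : Fin 4 → ℂ) : A v = ![v 1, 0, v 3, 0] := jordanTwoTwo_mulVec v
  have hA₀ : A (Pi.single 0 1) = 0 := by rw [hA_apply]; ext i; fin_cases i <;> simp
  have hA₂ : A (Pi.single 2 1) = 0 := by rw [hA_apply]; ext i; fin_cases i <;> simp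
  -- `A` maps `e₁, e₃` to the independent vectors `e₀, e₂`
  have hind : LinearIndependent ℂ ![A (Pi.single 1 1), A (Pi.single 3 1)] := by
    refine LinearIndependent.pair_iff.2 fun s t h => ⟨?_, ?_⟩
    · simpa [hA_apply] using congrFun h 0
    · simpa [hA_apply] using congrFun h 2
  obtain ⟨t, h₁, h₃⟩ := hT.exists_apply_eq_smul_pair hA hind
  refine ⟨t, (Matrix.mulVecLin_comp_eq_smul_comp_iff _ _ _).1
    ((Pi.basisFun ℂ (Fin 4)).ext fun i => ?_)⟩
  simp only [LinearMap.comp_apply, LinearMap.smul_apply, Pi.basisFun_apply]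
  match i with
  | 0 => rw [hA₀, map_zero, smul_zero, hT.apply_eq_zero_of_apply_eq_zero hA hA₀]
  | 1 => exact h₁
  | 2 => rw [hA₂, map_zero, smul_zero, hT.apply_eq_zero_of_apply_eq_zero hA hA₂]
  | 3 => exact h₃

end JordanTwoTwo

theorem stmt19 (N : Matrix (Fin 4) (Fin 4) ℂ)
    (hN : N = Matrix.of ![![0, 1, 0, 0], ![0, 0, 0, 0], ![0, 0, 0, 1], ![0, 0, 0, 0]])
    (T : Matrix (Fin 4) (Fin 4) ℂ) :
    Col N.mulVecLin T.mulVecLin ↔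
      ∃ t γ₁₁ γ₁₂ γ₁₃ γ₁₄ γ₃₁ γ₃₂ γ₃₃ γ₃₄ : ℂ,
        t * (γ₁₁ * γ₃₃ - γ₁₃ * γ₃₁) ≠ 0 ∧
        T = Matrix.of ![![γ₁₁, γ₁₂, γ₁₃, γ₁₄],
                        ![0, t * γ₁₁, 0, t * γ₁₃],
                        ![γ₃₁, γ₃₂, γ₃₃, γ₃₄],
                        ![0, t * γ₃₁, 0, t * γ₃₃]] := by
  obtain rfl : N = jordanTwoTwo := hN
  constructor
  · intro hT
    obtain ⟨t, ht⟩ := hT.exists_jordanTwoTwo_mul_eq_smul_mul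
    obtain ⟨γ₁₁, γ₁₂, γ₁₃, γ₁₄, γ₃₁, γ₃₂, γ₃₃, γ₃₄, rfl⟩ :=
      (jordanTwoTwo_mul_eq_smul_mul_iff _ _).1 ht
    have hdet := (Matrix.bijective_mulVecLin_iff _).1 hT.1
    rw [det_twistedCommutantForm, pow_ne_zero_iff two_ne_zero] at hdet
    exact ⟨t, γ₁₁, γ₁₂, γ₁₃, γ₁₄, γ₃₁, γ₃₂, γ₃₃, γ₃₄, hdet, rfl⟩
  · rintro ⟨t, γ₁₁, γ₁₂, γ₁₃, γ₁₄, γ₃₁, γ₃₂, γ₃₃, γ₃₄, hne, rfl⟩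
    refine col_of_comp_eq_smul_comp ?_ (left_ne_zero_of_mul hne)
      ((Matrix.mulVecLin_comp_eq_smul_comp_iff _ _ _).2
        ((jordanTwoTwo_mul_eq_smul_mul_iff _ _).2 ⟨_, _, _, _, _, _, _, _, rfl⟩))
    rw [Matrix.bijective_mulVecLin_iff, det_twistedCommutantForm]
    exact pow_ne_zero 2 hne
end
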